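/- Let n be a positive integer, let π ∈ NC(n), and let θ be a parity-preserving partition in NC(2n) such that θ ≪ π^(odd) ∪ K(π)^(even). Let X, Y be blocks of θ such that Y = Parent_θ(X) and Y has the same parity as X, and let θ' be the partition of {1,…,2n} obtained from θ by joining together the blocks X and Y. Then θ' is also a parity-preserving partition in NC(2n) satisfying θ' ≪ π^(odd) ∪ K(π)^(even). -/

import Mathlib

/-!
Merging `X` with its parent `Y` keeps `θ` non-crossing because `Y` is the innermost block around
`X`: a block separating a point of `Y` from a point of `X` would embrace `X` but not `Y`.

For `θ' ≪ φ` it suffices that `X` and `Y` lie in one block of `φ = π^(odd) ∪ K(π)^(even)`. Two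
facts about `φ`, both read off from `P_{K(π)} = P_π⁻¹ ∘ P_{1_n}`, give this: `φ` is non-crossing,
and for every block `C` of `φ` the points `min C - 1` and `max C + 1` lie in one block. Let `C ⊇ X`
be a block of `φ` and `Z` the block of `θ` through `min C` and `max C`. If `Z ≠ X`, then `Z`
embraces `X`, hence `Y`, and since `φ` is non-crossing `Y` lies in `C`. If `Z = X`, the same
argument applied to the block of `θ` spanning the block of `φ` through `min C - 1` and
`max C + 1` puts `min C - 1` into the block of `φ` containing `Y`, whose points have the parity
of `min C`.
-/

open Finset

attribute [local instance] Classical.propDecidable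

open scoped ComplexOrder

namespace BBP

/-- Partitions of `{1,…,m}` modeled as `Finpartition`s of `univ : Finset (Fin m)`. -/
abbrev FP (m : ℕ) := Finpartition (Finset.univ : Finset (Fin m))

noncomputable instance (m : ℕ) : Fintype (FP m) :=
  Fintype.ofInjective (fun π : FP m => π.parts) fun a b h => by
    cases a; cases b; simpa using h

/-- `x` is the minimum of the set `C`. -/
def IsMinOf {m : ℕ} (x : Fin m) (C : Finset (Fin m)) : Prop :=
  x ∈ C ∧ ∀ y ∈ C, x ≤ y

/-- `x` is the maximum of the set `C`. -/
def IsMaxOf {m : ℕ} (x : Fin m) (C : Finset (Fin m)) : Prop :=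
  x ∈ C ∧ ∀ y ∈ C, y ≤ x

/-- `a` and `b` lie in one block of `π`. -/
def SameBlock {m : ℕ} (π : FP m) (a b : Fin m) : Prop :=
  ∃ B ∈ π.parts, a ∈ B ∧ b ∈ B

/-- `π` is non-crossing: if `i<j<k<l`, `i,k` in one block and `j,l` in one block,
then all of them are in one block. -/
def IsNC {m : ℕ} (π : FP m) : Prop :=
  ∀ i j k l : Fin m, i < j → j < k → k < l →
    SameBlock π i k → SameBlock π j l → SameBlock π i j

/-- `A` embraces `B` : `min A ≤ min B` and `max B ≤ max A`. -/
def Embraces {m : ℕ} (A B : Finset (Fin m)) : Prop :=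
  ∃ a₁ a₂ b₁ b₂ : Fin m, IsMinOf a₁ A ∧ IsMaxOf a₂ A ∧ IsMinOf b₁ B ∧ IsMaxOf b₂ B ∧
    a₁ ≤ b₁ ∧ b₂ ≤ a₂

/-- `B` strictly embraces `A` : `min B < min A` and `max A < max B`. -/
def StrictlyEmbraces {m : ℕ} (B A : Finset (Fin m)) : Prop :=
  ∃ b₁ b₂ a₁ a₂ : Fin m, IsMinOf b₁ B ∧ IsMaxOf b₂ B ∧ IsMinOf a₁ A ∧ IsMaxOf a₂ A ∧
    b₁ < a₁ ∧ a₂ < b₂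

/-- `A` is an outer block of `π`. -/
def IsOuter {m : ℕ} (π : FP m) (A : Finset (Fin m)) : Prop :=
  A ∈ π.parts ∧ ¬ ∃ B ∈ π.parts, StrictlyEmbraces B A

/-- The number `|π|_out` of outer blocks of `π`. -/
noncomputable def numOuter {m : ℕ} (π : FP m) : ℕ :=
  (π.parts.filter fun A => IsOuter π A).card

/-- Reversed refinement order: every block of `ρ` is a union of blocks of `π`. -/
def Refines {m : ℕ} (π ρ : FP m) : Prop :=
  ∀ B ∈ π.parts, ∃ C ∈ ρ.parts, B ⊆ C

/-- The partial order `π ≪ ρ`. -/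
def Ll {m : ℕ} (π ρ : FP m) : Prop :=
  Refines π ρ ∧
    ∀ C ∈ ρ.parts, ∃ B ∈ π.parts, ∃ x y : Fin m,
      IsMinOf x C ∧ IsMaxOf y C ∧ x ∈ B ∧ y ∈ B

/-- The partition `1ₙ` of `{1,…,n+1}` with a single block. -/
noncomputable def fullPart (n : ℕ) : FP (n+1) :=
  Finpartition.indiscrete (by simpa using (Finset.univ_nonempty (α := Fin (n+1))).ne_empty)

/-- `π` is an interval partition. -/
def IsIntervalPartition {m : ℕ} (π : FP m) : Prop :=
  ∀ B ∈ π.parts, ∀ x ∈ B, ∀ z ∈ B, ∀ y : Fin m, x ≤ y → y ≤ z → y ∈ B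

/-- `σ` is the permutation associated to `π` : on each block `{b₁ < ⋯ < b_q}` it is the
cycle `b₁ ↦ b₂ ↦ ⋯ ↦ b_q ↦ b₁`. -/
def IsAssocPerm {m : ℕ} (π : FP m) (σ : Equiv.Perm (Fin m)) : Prop :=
  ∀ B ∈ π.parts, ∀ b ∈ B, σ b ∈ B ∧
    ((b < σ b ∧ ∀ x ∈ B, b < x → σ b ≤ x) ∨ (IsMaxOf b B ∧ IsMinOf (σ b) B))

/-- `κ` is the Kreweras complement of `π`, characterized by `P_κ = P_π⁻¹ ∘ P_{1ₙ}`,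
where `P_{1ₙ}` is the cycle `1 ↦ 2 ↦ ⋯ ↦ n ↦ 1` (i.e. `finRotate`). -/
def IsKrewerasPair {m : ℕ} (π κ : FP m) : Prop :=
  ∃ σπ σκ : Equiv.Perm (Fin m), IsAssocPerm π σπ ∧ IsAssocPerm κ σκ ∧
    σκ = σπ⁻¹ * finRotate m

/-- the element `2a-1` of `{1,…,2n}`, in `Fin (2n)` (0-indexed). -/
def oddEmb {n : ℕ} (a : Fin n) : Fin (2*n) := ⟨2*a.val, by have := a.isLt; omega⟩

/-- the element `2a` of `{1,…,2n}`, in `Fin (2n)` (0-indexed). -/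
def evenEmb {n : ℕ} (a : Fin n) : Fin (2*n) := ⟨2*a.val + 1, by have := a.isLt; omega⟩

/-- `θ = π^(odd) ∪ ρ^(even)` : the blocks of `θ` are the sets `{2a-1 : a ∈ A}` for `A`
a block of `π` and the sets `{2b : b ∈ B}` for `B` a block of `ρ`. -/
def IsOddEvenJoin {n : ℕ} (π ρ : FP n) (θ : FP (2*n)) : Prop :=
  θ.parts = π.parts.image (fun B => B.image oddEmb) ∪
    ρ.parts.image (fun B => B.image evenEmb)

/-- a block consisting of odd elements of `{1,…,2n}` (even 0-indexed values). -/
def OddBlock {m : ℕ} (B : Finset (Fin m)) : Prop := ∀ x ∈ B, x.val % 2 = 0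

/-- a block consisting of even elements of `{1,…,2n}` (odd 0-indexed values). -/
def EvenBlock {m : ℕ} (B : Finset (Fin m)) : Prop := ∀ x ∈ B, x.val % 2 = 1

/-- every block of `θ` is contained in the odds or in the evens. -/
def ParityPreserving {m : ℕ} (θ : FP m) : Prop :=
  ∀ B ∈ θ.parts, OddBlock B ∨ EvenBlock B

def OppositeParity {m : ℕ} (A B : Finset (Fin m)) : Prop :=
  (OddBlock A ∧ EvenBlock B) ∨ (EvenBlock A ∧ OddBlock B)

def SameParity {m : ℕ} (A B : Finset (Fin m)) : Prop :=
  (OddBlock A ∧ OddBlock B) ∨ (EvenBlock A ∧ EvenBlock B)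

/-- `P = Parent_θ(A)` : the unique block `P ≠ A` of `θ` embracing `A` such that every
block `A' ≠ A` of `θ` embracing `A` also embraces `P`. -/
def IsParent {m : ℕ} (θ : FP m) (A P : Finset (Fin m)) : Prop :=
  P ∈ θ.parts ∧ P ≠ A ∧ Embraces P A ∧
    ∀ A' ∈ θ.parts, A' ≠ A → Embraces A' A → Embraces A' P

/-- `θ` has exactly two outer blocks. -/
def ExactlyTwoOuterBlocks {m : ℕ} (θ : FP m) : Prop :=
  ∃ M ∈ θ.parts, ∃ N ∈ θ.parts, M ≠ N ∧ IsOuter θ M ∧ IsOuter θ N ∧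
    ∀ A ∈ θ.parts, IsOuter θ A → A = M ∨ A = N

/-- A series in `ℂ₀⟨⟨z₁,…,z_k⟩⟩`, given by its family of coefficients: `f n w` is the
coefficient of `z_{w 0} z_{w 1} ⋯ z_{w n}` (a word of length `n+1 ≥ 1`). -/
abbrev NCSeries (k : ℕ) := (n : ℕ) → (Fin (n+1) → Fin k) → ℂ

/-- The coefficient `Cf_{w|B}(f)` of the restriction of the word `w` to the set `B`,
listing the elements of `B` in increasing order.  (Equals `1` for `B = ∅`.) -/
noncomputable def partCoeff {k m : ℕ} (f : NCSeries k) (w : Fin (m+1) → Fin k)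
    (B : Finset (Fin (m+1))) : ℂ :=
  if h : B.Nonempty then
    f (B.card - 1) (fun j =>
      w ((B.orderIsoOfFin (Nat.succ_pred_eq_of_pos (Finset.card_pos.mpr h)).symm j).1))
  else 1

/-- The generalized coefficient `Cf_{w;π}(f) = ∏_{B block of π} Cf_{w|B}(f)`. -/
noncomputable def genCoeff {k m : ℕ} (f : NCSeries k) (w : Fin (m+1) → Fin k)
    (π : FP (m+1)) : ℂ :=
  ∏ B ∈ π.parts, partCoeff f w B

/-- Linear functionals on `ℂ⟨X₁,…,X_k⟩`. -/
abbrev Dist (k : ℕ) := FreeAlgebra ℂ (Fin k) →ₗ[ℂ] ℂ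

/-- `μ ∈ D_alg(k)` : `μ` is normalized by `μ(1) = 1`. -/
def IsDalg {k : ℕ} (μ : Dist k) : Prop := μ 1 = 1

/-- The moment series `M_μ`, with `(momentSeries μ) n w = μ (X_{w 0} ⋯ X_{w n})`. -/
noncomputable def momentSeries {k : ℕ} (μ : Dist k) : NCSeries k :=
  fun _ w => μ ((List.ofFn fun j => FreeAlgebra.ι ℂ (w j)).prod)

/-- `f = R_μ` : the moments of `μ` are obtained from `f` by summation over all
non-crossing partitions. -/
def IsRTransform {k : ℕ} (μ : Dist k) (f : NCSeries k) : Prop :=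
  ∀ (n : ℕ) (w : Fin (n+1) → Fin k),
    momentSeries μ n w = ∑ π : FP (n+1), if IsNC π then genCoeff f w π else 0

/-- `g = η_μ` : the moments of `μ` are obtained from `g` by summation over all
interval partitions. -/
def IsEtaSeries {k : ℕ} (μ : Dist k) (g : NCSeries k) : Prop :=
  ∀ (n : ℕ) (w : Fin (n+1) → Fin k),
    momentSeries μ n w = ∑ π : FP (n+1), if IsIntervalPartition π then genCoeff g w π else 0

/-- `μ ∈ D_c(k)` : `μ` is the joint distribution of a `k`-tuple of selfadjoint elements
with respect to a state on a unital C*-algebra. -/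
def IsDc {k : ℕ} (μ : Dist k) : Prop :=
  IsDalg μ ∧
  ∃ (A : Type) (_ : NormedRing A) (_ : StarRing A) (_ : CStarRing A)
    (_ : NormedAlgebra ℂ A) (_ : StarModule ℂ A) (_ : CompleteSpace A)
    (φ : A →ₗ[ℂ] ℂ) (x : Fin k → A),
      φ 1 = 1 ∧ (∀ a : A, 0 ≤ φ (star a * a)) ∧ (∀ i, IsSelfAdjoint (x i)) ∧
      ∀ (n : ℕ) (w : Fin (n+1) → Fin k),
        momentSeries μ n w = φ ((List.ofFn fun j => x (w j)).prod)

/-- convergence in moments. -/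
def ConvInMoments {k : ℕ} (μseq : ℕ → Dist k) (μ : Dist k) : Prop :=
  ∀ P : FreeAlgebra ℂ (Fin k),
    Filter.Tendsto (fun N => μseq N P) Filter.atTop (nhds (μ P))

/-- coefficientwise convergence of series. -/
def ConvCoeffwise {k : ℕ} (fseq : ℕ → NCSeries k) (f : NCSeries k) : Prop :=
  ∀ (n : ℕ) (w : Fin (n+1) → Fin k),
    Filter.Tendsto (fun N => fseq N n w) Filter.atTop (nhds (f n w))

/-- `ν` is the `p`-fold free additive convolution `μ ⊞ ⋯ ⊞ μ`, i.e. `R_ν = p · R_μ`. -/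
def IsNFoldFree {k : ℕ} (p : ℕ) (μ ν : Dist k) : Prop :=
  ∃ f : NCSeries k, IsRTransform μ f ∧ IsRTransform ν (fun n w => (p : ℂ) * f n w)

/-- `ν` is the `p`-fold Boolean convolution `μ ⊎ ⋯ ⊎ μ`, i.e. `η_ν = p · η_μ`. -/
def IsNFoldBool {k : ℕ} (p : ℕ) (μ ν : Dist k) : Prop :=
  ∃ g : NCSeries k, IsEtaSeries μ g ∧ IsEtaSeries ν (fun n w => (p : ℂ) * g n w)

/-- `ν = 𝔹(μ)` : the Boolean Bercovici–Pata bijection, `R_{𝔹(μ)} = η_μ`. -/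
def IsBP {k : ℕ} (μ ν : Dist k) : Prop :=
  ∃ f : NCSeries k, IsEtaSeries μ f ∧ IsRTransform ν f

/-- `μ ∈ D_c(k)` is infinitely divisible with respect to `⊞`. -/
def IsInfDiv {k : ℕ} (μ : Dist k) : Prop :=
  IsDc μ ∧ ∀ N : ℕ, 0 < N → ∃ ν : Dist k, IsDc ν ∧ IsNFoldFree N ν μ

/-- `g = Reta(f)`, i.e. there is `μ ∈ D_alg(k)` with `f = R_μ` and `g = η_μ`. -/
def RetaRel {k : ℕ} (f g : NCSeries k) : Prop :=
  ∃ μ : Dist k, IsDalg μ ∧ IsRTransform μ f ∧ IsEtaSeries μ g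

lemma exists_isMinOf {m : ℕ} {B : Finset (Fin m)} (h : B.Nonempty) : ∃ x, IsMinOf x B :=
  ⟨B.min' h, B.min'_mem h, fun y hy => B.min'_le y hy⟩

lemma exists_isMaxOf {m : ℕ} {B : Finset (Fin m)} (h : B.Nonempty) : ∃ x, IsMaxOf x B :=
  ⟨B.max' h, B.max'_mem h, fun y hy => B.le_max' y hy⟩

lemma IsMinOf.unique {m : ℕ} {B : Finset (Fin m)} {x y : Fin m}
    (hx : IsMinOf x B) (hy : IsMinOf y B) : x = y :=
  le_antisymm (hx.2 y hy.1) (hy.2 x hx.1)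

lemma IsMaxOf.unique {m : ℕ} {B : Finset (Fin m)} {x y : Fin m}
    (hx : IsMaxOf x B) (hy : IsMaxOf y B) : x = y :=
  le_antisymm (hy.2 x hx.1) (hx.2 y hy.1)

lemma IsMinOf.of_image {m k : ℕ} {f : Fin m → Fin k} (hf : StrictMono f) {A : Finset (Fin m)}
    {x : Fin k} (h : IsMinOf x (A.image f)) : ∃ a, f a = x ∧ IsMinOf a A := by
  obtain ⟨a, ha, rfl⟩ := Finset.mem_image.1 h.1
  exact ⟨a, rfl, ha, fun b hb => hf.le_iff_le.1 (h.2 _ (Finset.mem_image_of_mem f hb))⟩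

lemma IsMaxOf.of_image {m k : ℕ} {f : Fin m → Fin k} (hf : StrictMono f) {A : Finset (Fin m)}
    {x : Fin k} (h : IsMaxOf x (A.image f)) : ∃ a, f a = x ∧ IsMaxOf a A := by
  obtain ⟨a, ha, rfl⟩ := Finset.mem_image.1 h.1
  exact ⟨a, rfl, ha, fun b hb => hf.le_iff_le.1 (h.2 _ (Finset.mem_image_of_mem f hb))⟩

section Embraces

variable {m : ℕ} {A B : Finset (Fin m)}

lemma Embraces.exists_forall_le (h : Embraces A B) : ∃ a ∈ A, ∀ b ∈ B, a ≤ b := by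
  obtain ⟨a₁, -, b₁, -, ha₁, -, hb₁, -, h₁, -⟩ := h
  exact ⟨a₁, ha₁.1, fun b hb => h₁.trans (hb₁.2 b hb)⟩

lemma Embraces.exists_forall_ge (h : Embraces A B) : ∃ a ∈ A, ∀ b ∈ B, b ≤ a := by
  obtain ⟨-, a₂, -, b₂, -, ha₂, -, hb₂, -, h₂⟩ := h
  exact ⟨a₂, ha₂.1, fun b hb => (hb₂.2 b hb).trans h₂⟩

lemma embraces_of_forall (hB : B.Nonempty) {a a' : Fin m} (ha : a ∈ A) (ha' : a' ∈ A)
    (h : ∀ b ∈ B, a ≤ b ∧ b ≤ a') : Embraces A B := by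
  obtain ⟨a₁, ha₁⟩ := exists_isMinOf ⟨a, ha⟩
  obtain ⟨a₂, ha₂⟩ := exists_isMaxOf ⟨a, ha⟩
  obtain ⟨b₁, hb₁⟩ := exists_isMinOf hB
  obtain ⟨b₂, hb₂⟩ := exists_isMaxOf hB
  exact ⟨a₁, a₂, b₁, b₂, ha₁, ha₂, hb₁, hb₂, (ha₁.2 a ha).trans (h b₁ hb₁.1).1,
    (h b₂ hb₂.1).2.trans (ha₂.2 a' ha')⟩

end Embraces

section NonCrossing

variable {m : ℕ} {θ : FP m}

lemma ne_of_mem_parts_of_ne {P Q : Finset (Fin m)} (hP : P ∈ θ.parts) (hQ : Q ∈ θ.parts)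
    (hPQ : P ≠ Q) {p q : Fin m} (hp : p ∈ P) (hq : q ∈ Q) : p ≠ q :=
  fun h => hPQ (θ.eq_of_mem_parts hP hQ hp (h ▸ hq))

lemma isNC_iff_eq_of_cross : IsNC θ ↔ ∀ P ∈ θ.parts, ∀ Q ∈ θ.parts, ∀ i j k l : Fin m,
    i < j → j < k → k < l → i ∈ P → k ∈ P → j ∈ Q → l ∈ Q → P = Q := by
  constructor
  · intro hθ P hP Q hQ i j k l hij hjk hkl hi hk hj hl
    obtain ⟨G, hG, hiG, hjG⟩ := hθ i j k l hij hjk hkl ⟨P, hP, hi, hk⟩ ⟨Q, hQ, hj, hl⟩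
    exact (θ.eq_of_mem_parts hP hG hi hiG).trans (θ.eq_of_mem_parts hG hQ hjG hj)
  · rintro hθ i j k l hij hjk hkl ⟨P, hP, hi, hk⟩ ⟨Q, hQ, hj, hl⟩
    exact ⟨P, hP, hi, hθ P hP Q hQ i j k l hij hjk hkl hi hk hj hl ▸ hj⟩

lemma IsNC.forall_mem_Ioo (hθ : IsNC θ) {P Q : Finset (Fin m)} (hP : P ∈ θ.parts)
    (hQ : Q ∈ θ.parts) (hPQ : P ≠ Q) {q q' p : Fin m} (hq : q ∈ Q) (hq' : q' ∈ Q) (hp : p ∈ P)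
    (hpq : p ∈ Set.Ioo q q') : ∀ p' ∈ P, p' ∈ Set.Ioo q q' := by
  have hcross := isNC_iff_eq_of_cross.1 hθ
  intro p' hp'
  have hne : ∀ r ∈ Q, p' ≠ r := fun r hr => ne_of_mem_parts_of_ne hP hQ hPQ hp' hr
  refine ⟨lt_of_le_of_ne (not_lt.1 fun h => ?_) (hne q hq).symm,
    lt_of_le_of_ne (not_lt.1 fun h => ?_) (hne q' hq')⟩
  · exact hPQ (hcross P hP Q hQ p' q p q' h hpq.1 hpq.2 hp' hp hq hq')
  · exact hPQ (hcross Q hQ P hP q p q' p' hpq.1 hpq.2 h hq hq' hp hp').symm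

end NonCrossing

section Parent

variable {m : ℕ} {θ : FP m} {X Y G : Finset (Fin m)} {g g' : Fin m}

lemma IsNC.forall_mem_Ioo_of_embraces (hθ : IsNC θ) (hY : Y ∈ θ.parts) (hG : G ∈ θ.parts)
    (hGY : G ≠ Y) (hYX : Embraces Y X) (hg : g ∈ G) (hg' : g' ∈ G) {y : Fin m} (hy : y ∈ Y)
    (hyg : y ∈ Set.Ioo g g') : ∀ x ∈ X, x ∈ Set.Ioo g g' := by
  have hYg := hθ.forall_mem_Ioo hY hG hGY.symm hg hg' hy hyg
  obtain ⟨y₁, hy₁, hy₁X⟩ := hYX.exists_forall_le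
  obtain ⟨y₂, hy₂, hy₂X⟩ := hYX.exists_forall_ge
  exact fun x hx => ⟨(hYg y₁ hy₁).1.trans_le (hy₁X x hx), (hy₂X x hx).trans_lt (hYg y₂ hy₂).2⟩

/-- `G` embraces `X`, hence the parent `Y`; a point of `Y` outside `(g, g')` would then make `Y`
cross `G`. -/
lemma IsParent.forall_mem_Ioo (hθ : IsNC θ) (hX : X ∈ θ.parts) (hXY : IsParent θ X Y)
    (hG : G ∈ θ.parts) (hGX : G ≠ X) (hGY : G ≠ Y) (hg : g ∈ G) (hg' : g' ∈ G) {x : Fin m}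
    (hx : x ∈ X) (hxg : x ∈ Set.Ioo g g') : ∀ y ∈ Y, y ∈ Set.Ioo g g' := by
  obtain ⟨hY, -, hYX, hparent⟩ := hXY
  have hXg := hθ.forall_mem_Ioo hX hG hGX.symm hg hg' hx hxg
  have hGX' : Embraces G X :=
    embraces_of_forall ⟨x, hx⟩ hg hg' fun b hb => ⟨(hXg b hb).1.le, (hXg b hb).2.le⟩
  obtain ⟨a₁, ha₁, ha₁Y⟩ := (hparent G hG hGX hGX').exists_forall_le
  obtain ⟨a₂, ha₂, ha₂Y⟩ := (hparent G hG hGX hGX').exists_forall_ge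
  obtain ⟨y₁, hy₁, hy₁X⟩ := hYX.exists_forall_le
  obtain ⟨y₂, hy₂, hy₂X⟩ := hYX.exists_forall_ge
  have hne : ∀ a ∈ G, ∀ b ∈ Y, a ≠ b := fun a ha b hb => ne_of_mem_parts_of_ne hG hY hGY ha hb
  intro y hy
  constructor
  · by_contra! hyg
    have hy' : y ∈ Set.Ioo a₁ g :=
      ⟨(ha₁Y y hy).lt_of_ne (hne a₁ ha₁ y hy), hyg.lt_of_ne (hne g hg y hy).symm⟩
    have := (hθ.forall_mem_Ioo hY hG hGY.symm ha₁ hg hy hy' y₂ hy₂).2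
    exact (hy₂X x hx).not_gt (this.trans (hXg x hx).1)
  · by_contra! hyg
    have hy' : y ∈ Set.Ioo g' a₂ :=
      ⟨hyg.lt_of_ne (hne g' hg' y hy), (ha₂Y y hy).lt_of_ne (hne a₂ ha₂ y hy).symm⟩
    have := (hθ.forall_mem_Ioo hY hG hGY.symm hg' ha₂ hy hy' y₁ hy₁).1
    exact (hy₁X x hx).not_gt ((hXg x hx).2.trans this)

lemma IsParent.forall_mem_Ioo_union (hθ : IsNC θ) (hX : X ∈ θ.parts) (hXY : IsParent θ X Y)
    (hG : G ∈ θ.parts) (hGX : G ≠ X) (hGY : G ≠ Y) (hg : g ∈ G) (hg' : g' ∈ G) {w : Fin m}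
    (hw : w ∈ X ∪ Y) (hwg : w ∈ Set.Ioo g g') : ∀ w' ∈ X ∪ Y, w' ∈ Set.Ioo g g' := by
  obtain ⟨x, hx, hxg⟩ : ∃ x ∈ X, x ∈ Set.Ioo g g' := by
    rcases Finset.mem_union.1 hw with hwX | hwY
    · exact ⟨w, hwX, hwg⟩
    · obtain ⟨x, hx⟩ := θ.nonempty_of_mem_parts hX
      exact ⟨x, hx, hθ.forall_mem_Ioo_of_embraces hXY.1 hG hGY hXY.2.2.1 hg hg' hwY hwg x hx⟩
  intro w' hw'
  rcases Finset.mem_union.1 hw' with hw'X | hw'Y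
  · exact hθ.forall_mem_Ioo hX hG hGX.symm hg hg' hx hxg w' hw'X
  · exact hXY.forall_mem_Ioo hθ hX hG hGX hGY hg hg' hx hxg w' hw'Y

end Parent

section Merge

variable {m : ℕ} {θ θ' : FP m} {X Y : Finset (Fin m)}

lemma mem_parts_merge (hθ' : θ'.parts = insert (X ∪ Y) ((θ.parts.erase X).erase Y))
    {G : Finset (Fin m)} : G ∈ θ'.parts ↔ G = X ∪ Y ∨ (G ∈ θ.parts ∧ G ≠ X ∧ G ≠ Y) := by
  rw [hθ', Finset.mem_insert, Finset.mem_erase, Finset.mem_erase]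
  tauto

lemma exists_mem_parts_merge_superset
    (hθ' : θ'.parts = insert (X ∪ Y) ((θ.parts.erase X).erase Y))
    {G : Finset (Fin m)} (hG : G ∈ θ.parts) : ∃ G' ∈ θ'.parts, G ⊆ G' := by
  by_cases hGX : G = X
  · exact ⟨X ∪ Y, (mem_parts_merge hθ').2 (.inl rfl), hGX ▸ Finset.subset_union_left⟩
  by_cases hGY : G = Y
  · exact ⟨X ∪ Y, (mem_parts_merge hθ').2 (.inl rfl), hGY ▸ Finset.subset_union_right⟩
  exact ⟨G, (mem_parts_merge hθ').2 (.inr ⟨hG, hGX, hGY⟩), subset_rfl⟩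

lemma IsNC.merge_parent (hθ : IsNC θ) (hX : X ∈ θ.parts) (hXY : IsParent θ X Y)
    (hθ' : θ'.parts = insert (X ∪ Y) ((θ.parts.erase X).erase Y)) : IsNC θ' := by
  rw [isNC_iff_eq_of_cross]
  intro P hP Q hQ i j k l hij hjk hkl hi hk hj hl
  rcases (mem_parts_merge hθ').1 hP with rfl | ⟨hP, hPX, hPY⟩ <;>
    rcases (mem_parts_merge hθ').1 hQ with rfl | ⟨hQ, hQX, hQY⟩
  · rfl
  · exact absurd (hXY.forall_mem_Ioo_union hθ hX hQ hQX hQY hj hl hk ⟨hjk, hkl⟩ i hi).1 hij.not_gt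
  · exact absurd (hXY.forall_mem_Ioo_union hθ hX hP hPX hPY hi hk hj ⟨hij, hjk⟩ l hl).2 hkl.not_gt
  · exact isNC_iff_eq_of_cross.1 hθ P hP Q hQ i j k l hij hjk hkl hi hk hj hl

lemma ParityPreserving.merge (hθ : ParityPreserving θ) (hXY : SameParity X Y)
    (hθ' : θ'.parts = insert (X ∪ Y) ((θ.parts.erase X).erase Y)) : ParityPreserving θ' := by
  intro G hG
  rcases (mem_parts_merge hθ').1 hG with rfl | ⟨hG, -, -⟩
  · rcases hXY with ⟨hX, hY⟩ | ⟨hX, hY⟩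
    · exact .inl fun x hx => (Finset.mem_union.1 hx).elim (hX x) (hY x)
    · exact .inr fun x hx => (Finset.mem_union.1 hx).elim (hX x) (hY x)
  · exact hθ G hG

lemma Ll.merge {φ : FP m} (hll : Ll θ φ) {C : Finset (Fin m)} (hC : C ∈ φ.parts) (hXC : X ⊆ C)
    (hYC : Y ⊆ C)
    (hθ' : θ'.parts = insert (X ∪ Y) ((θ.parts.erase X).erase Y)) : Ll θ' φ := by
  refine ⟨fun G hG => ?_, fun D hD => ?_⟩
  · rcases (mem_parts_merge hθ').1 hG with rfl | ⟨hG, -, -⟩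
    · exact ⟨C, hC, Finset.union_subset hXC hYC⟩
    · exact hll.1 G hG
  · obtain ⟨G, hG, a, b, ha, hb, haG, hbG⟩ := hll.2 D hD
    obtain ⟨G', hG', hGG'⟩ := exists_mem_parts_merge_superset hθ' hG
    exact ⟨G', hG', a, b, ha, hb, hGG' haG, hGG' hbG⟩

end Merge

section Kreweras

variable {m : ℕ} {π κ : FP m} {σ σπ σκ : Equiv.Perm (Fin m)}

lemma IsAssocPerm.sameBlock_apply (h : IsAssocPerm π σ) (b : Fin m) : SameBlock π b (σ b) := by
  obtain ⟨B, hB, hb⟩ := π.exists_mem (Finset.mem_univ b)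
  exact ⟨B, hB, hb, (h B hB b hb).1⟩

lemma IsAssocPerm.isMinOf_apply (h : IsAssocPerm π σ) {B : Finset (Fin m)} (hB : B ∈ π.parts)
    {b : Fin m} (hb : IsMaxOf b B) : IsMinOf (σ b) B := by
  obtain ⟨hσb, ⟨hlt, -⟩ | ⟨-, hmin⟩⟩ := h B hB b hb.1
  · exact absurd (hb.2 _ hσb) hlt.not_ge
  · exact hmin

lemma IsAssocPerm.isMaxOf_symm_apply (h : IsAssocPerm π σ) {B : Finset (Fin m)}
    (hB : B ∈ π.parts) {b : Fin m} (hb : IsMinOf b B) : IsMaxOf (σ⁻¹ b) B := by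
  obtain ⟨C, hC, hc⟩ := π.exists_mem (Finset.mem_univ (σ⁻¹ b))
  have hσc := (h C hC _ hc).1
  rw [Equiv.Perm.coe_inv, Equiv.apply_symm_apply] at hσc
  obtain rfl := π.eq_of_mem_parts hC hB hσc hb.1
  obtain ⟨-, ⟨hlt, -⟩ | ⟨hmax, -⟩⟩ := h C hC _ hc
  · rw [Equiv.Perm.coe_inv, Equiv.apply_symm_apply] at hlt
    exact absurd (hb.2 _ hc) hlt.not_ge
  · exact hmax

lemma val_finRotate_of_lt (y : Fin m) (h : y.val + 1 < m) : (finRotate m y).val = y.val + 1 := by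
  obtain ⟨m, rfl⟩ : ∃ m', m = m' + 1 := ⟨m - 1, by omega⟩
  simpa using congrArg Fin.val (finRotate_of_lt (n := m) (k := y.val) (by omega))

lemma val_apply_apply_of_kreweras (hrel : σκ = σπ⁻¹ * finRotate m) {y : Fin m}
    (h : y.val + 1 < m) : (σπ (σκ y)).val = y.val + 1 := by
  rw [hrel, Equiv.Perm.mul_apply, Equiv.Perm.coe_inv, Equiv.apply_symm_apply,
    val_finRotate_of_lt y h]

lemma kreweras_apply_lt (hπ : IsNC π) (hπa : IsAssocPerm π σπ)
    (hrel : σκ = σπ⁻¹ * finRotate m) {A : Finset (Fin m)} (hA : A ∈ π.parts) {a a' y : Fin m}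
    (ha : a ∈ A) (ha' : a' ∈ A) (hay : a ≤ y) (hya : y < a') : σκ y < a' := by
  rw [Fin.le_def] at hay
  rw [Fin.lt_def] at hya ⊢
  have hz := val_apply_apply_of_kreweras hrel (y := y) (by omega)
  obtain ⟨C, hC, hwC⟩ := π.exists_mem (Finset.mem_univ (σκ y))
  obtain ⟨hzC, ⟨hlt, -⟩ | ⟨-, hzmin⟩⟩ := hπa C hC _ hwC
  · rw [Fin.lt_def] at hlt
    omega
  · by_contra! hwa
    have hCA : C ≠ A := by
      rintro rfl
      have := Fin.le_def.1 (hzmin.2 a ha)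
      omega
    have hza : σπ (σκ y) ∈ Set.Ioo a a' :=
      ⟨Fin.lt_def.2 (by omega),
        lt_of_le_of_ne (Fin.le_def.2 (by omega)) (ne_of_mem_parts_of_ne hC hA hCA hzC ha')⟩
    exact (Fin.lt_def.1 (hπ.forall_mem_Ioo hC hA hCA ha ha' hzC hza _ hwC).2).not_ge hwa

lemma false_of_le_lt_le_kreweras (hπ : IsNC π) (hπa : IsAssocPerm π σπ)
    (hκa : IsAssocPerm κ σκ) (hrel : σκ = σπ⁻¹ * finRotate m) {A B : Finset (Fin m)}
    (hA : A ∈ π.parts) (hB : B ∈ κ.parts) {a a' b b' : Fin m} (ha : a ∈ A) (ha' : a' ∈ A)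
    (hb : b ∈ B) (hb' : b' ∈ B) (h₁ : a ≤ b) (h₂ : b < a') (h₃ : a' ≤ b') : False := by
  -- the largest `c ∈ B` below `a'` cannot be followed in `B` by a larger point
  set S := B.filter (· < a')
  have hbS : b ∈ S := Finset.mem_filter.2 ⟨hb, h₂⟩
  obtain ⟨hcB, hca⟩ := Finset.mem_filter.1 (S.max'_mem ⟨b, hbS⟩)
  obtain ⟨hσc, ⟨hlt, -⟩ | ⟨hcmax, -⟩⟩ := hκa B hB _ hcB
  · have := kreweras_apply_lt hπ hπa hrel hA ha ha' (h₁.trans (S.le_max' b hbS)) hca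
    exact (S.le_max' _ (Finset.mem_filter.2 ⟨hσc, this⟩)).not_gt hlt
  · exact (hcmax.2 b' hb').not_gt (hca.trans_le h₃)

lemma exists_sameBlock_min_succ_max (hπa : IsAssocPerm π σπ) (hκa : IsAssocPerm κ σκ)
    (hrel : σκ = σπ⁻¹ * finRotate m) {B : Finset (Fin m)} (hB : B ∈ κ.parts) {β M : Fin m}
    (hβ : IsMinOf β B) (hM : IsMaxOf M B) (h : M.val + 1 < m) :
    ∃ e : Fin m, e.val = M.val + 1 ∧ SameBlock π β e := by
  refine ⟨σπ β, ?_, hπa.sameBlock_apply β⟩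
  rw [← (hκa.isMinOf_apply hB hM).unique hβ]
  exact val_apply_apply_of_kreweras hrel h

lemma exists_sameBlock_pred_min_max (hπa : IsAssocPerm π σπ) (hκa : IsAssocPerm κ σκ)
    (hrel : σκ = σπ⁻¹ * finRotate m) {A : Finset (Fin m)} (hA : A ∈ π.parts) {α μ : Fin m}
    (hα : IsMinOf α A) (hμ : IsMaxOf μ A) (h : 0 < α.val) :
    ∃ d : Fin m, d.val + 1 = α.val ∧ SameBlock κ d μ := by
  let d : Fin m := ⟨α.val - 1, by omega⟩
  have hd : σπ (σκ d) = α := Fin.ext <| by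
    rw [val_apply_apply_of_kreweras hrel (by simp only [d]; omega)]
    simp only [d]
    omega
  have hdμ : σκ d = μ :=
    (Equiv.Perm.inv_eq_iff_eq.2 hd.symm).symm.trans ((hπa.isMaxOf_symm_apply hA hα).unique hμ)
  exact ⟨d, by simp only [d]; omega, hdμ ▸ hκa.sameBlock_apply d⟩

lemma false_of_lt_le_lt_kreweras (hπ : IsNC π) (hπa : IsAssocPerm π σπ)
    (hκa : IsAssocPerm κ σκ) (hrel : σκ = σπ⁻¹ * finRotate m) {A B : Finset (Fin m)}
    (hA : A ∈ π.parts) (hB : B ∈ κ.parts) {a a' b b' : Fin m} (ha : a ∈ A) (ha' : a' ∈ A)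
    (hb : b ∈ B) (hb' : b' ∈ B) (h₁ : b < a) (h₂ : a ≤ b') (h₃ : b' < a') : False := by
  obtain ⟨β, hβ⟩ := exists_isMinOf (κ.nonempty_of_mem_parts hB)
  obtain ⟨M, hM⟩ := exists_isMaxOf (κ.nonempty_of_mem_parts hB)
  by_cases hMa' : a' ≤ M
  · exact false_of_le_lt_le_kreweras hπ hπa hκa hrel hA hB ha ha' hb' hM.1 h₂ h₃ hMa'
  push Not at hMa'
  have hbM := Fin.le_def.1 (hM.2 b' hb')
  rw [Fin.lt_def] at hMa' h₃
  rw [Fin.le_def] at h₂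
  obtain ⟨e, he, E, hE, hβE, heE⟩ :=
    exists_sameBlock_min_succ_max hπa hκa hrel hB hβ hM (by have := a'.isLt; omega)
  by_cases hEA : E = A
  · subst hEA
    exact false_of_le_lt_le_kreweras hπ hπa hκa hrel hE hB hβE ha hb hb' (hβ.2 b hb) h₁
      (Fin.le_def.2 h₂)
  · have hea : e ∈ Set.Ioo a a' :=
      ⟨Fin.lt_def.2 (by omega),
        lt_of_le_of_ne (Fin.le_def.2 (by omega)) (ne_of_mem_parts_of_ne hE hA hEA heE ha')⟩
    exact (hπ.forall_mem_Ioo hE hA hEA ha ha' heE hea β hβE).1.not_ge ((hβ.2 b hb).trans h₁.le)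

lemma isNC_of_kreweras (hπ : IsNC π) (hπa : IsAssocPerm π σπ) (hκa : IsAssocPerm κ σκ)
    (hrel : σκ = σπ⁻¹ * finRotate m) : IsNC κ := by
  have not_cross_past_max : ∀ B ∈ κ.parts, ∀ B' ∈ κ.parts, ∀ β M b M' : Fin m,
      IsMinOf β B → IsMaxOf M B → b ∈ B' → M' ∈ B' → β ≤ b → b ≤ M → M < M' → False := by
    intro B hB B' hB' β M b M' hβ hM hb hM' h₁ h₂ h₃
    rw [Fin.le_def] at h₂
    rw [Fin.lt_def] at h₃
    obtain ⟨e, he, E, hE, hβE, heE⟩ :=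
      exists_sameBlock_min_succ_max hπa hκa hrel hB hβ hM (by have := M'.isLt; omega)
    exact false_of_le_lt_le_kreweras hπ hπa hκa hrel hE hB' hβE heE hb hM' h₁
      (Fin.lt_def.2 (by omega)) (Fin.le_def.2 (by omega))
  rw [isNC_iff_eq_of_cross]
  intro P hP Q hQ p q r s hpq hqr hrs hp hr hq hs
  by_contra hPQ
  obtain ⟨α, hα⟩ := exists_isMinOf (κ.nonempty_of_mem_parts hP)
  obtain ⟨β, hβ⟩ := exists_isMinOf (κ.nonempty_of_mem_parts hQ)
  obtain ⟨MP, hMP⟩ := exists_isMaxOf (κ.nonempty_of_mem_parts hP)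
  obtain ⟨MQ, hMQ⟩ := exists_isMaxOf (κ.nonempty_of_mem_parts hQ)
  rcases lt_trichotomy MP MQ with hlt | heq | hgt
  · exact not_cross_past_max P hP Q hQ α MP q MQ hα hMP hq hMQ.1 ((hα.2 p hp).trans hpq.le)
      (hqr.le.trans (hMP.2 r hr)) hlt
  · exact hPQ (κ.eq_of_mem_parts hP hQ hMP.1 (heq ▸ hMQ.1))
  · exact not_cross_past_max Q hQ P hP β MQ r MP hβ hMQ hr hMP.1 ((hβ.2 q hq).trans hqr.le)
      (hrs.le.trans (hMQ.2 s hs)) hgt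

end Kreweras

section OddEvenJoin

variable {n : ℕ} {π κ : FP n} {φ : FP (2*n)}

lemma oddEmb_strictMono : StrictMono (oddEmb (n := n)) := fun a b h => by
  simp only [Fin.lt_def, oddEmb] at h ⊢
  omega

lemma evenEmb_strictMono : StrictMono (evenEmb (n := n)) := fun a b h => by
  simp only [Fin.lt_def, evenEmb] at h ⊢
  omega

lemma IsOddEvenJoin.mem_parts (hφ : IsOddEvenJoin π κ φ) {C : Finset (Fin (2*n))}
    (hC : C ∈ φ.parts) :
    (∃ A ∈ π.parts, A.image oddEmb = C) ∨ ∃ B ∈ κ.parts, B.image evenEmb = C := by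
  rw [hφ, Finset.mem_union, Finset.mem_image, Finset.mem_image] at hC
  exact hC

lemma IsOddEvenJoin.parityPreserving (hφ : IsOddEvenJoin π κ φ) : ParityPreserving φ := by
  intro C hC
  rcases hφ.mem_parts hC with ⟨A, -, rfl⟩ | ⟨B, -, rfl⟩
  · refine .inl fun x hx => ?_
    obtain ⟨a, -, rfl⟩ := Finset.mem_image.1 hx
    simp [oddEmb]
  · refine .inr fun x hx => ?_
    obtain ⟨b, -, rfl⟩ := Finset.mem_image.1 hx
    simp [evenEmb]

lemma IsOddEvenJoin.isNC (hφ : IsOddEvenJoin π κ φ) (hπ : IsNC π)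
    (hκ : IsKrewerasPair π κ) : IsNC φ := by
  obtain ⟨σπ, σκ, hπa, hκa, hrel⟩ := hκ
  have hκNC := isNC_iff_eq_of_cross.1 (isNC_of_kreweras hπ hπa hκa hrel)
  have hπNC := isNC_iff_eq_of_cross.1 hπ
  rw [isNC_iff_eq_of_cross]
  intro P hP Q hQ i j k l hij hjk hkl hi hk hj hl
  rcases hφ.mem_parts hP with ⟨A, hA, rfl⟩ | ⟨A, hA, rfl⟩ <;>
  rcases hφ.mem_parts hQ with ⟨B, hB, rfl⟩ | ⟨B, hB, rfl⟩ <;>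
  obtain ⟨a, ha, rfl⟩ := Finset.mem_image.1 hi <;>
  obtain ⟨a', ha', rfl⟩ := Finset.mem_image.1 hk <;>
  obtain ⟨b, hb, rfl⟩ := Finset.mem_image.1 hj <;>
  obtain ⟨b', hb', rfl⟩ := Finset.mem_image.1 hl <;>
  simp only [Fin.lt_def, oddEmb, evenEmb] at hij hjk hkl
  · rw [hπNC A hA B hB a b a' b' (Fin.lt_def.2 (by omega)) (Fin.lt_def.2 (by omega))
      (Fin.lt_def.2 (by omega)) ha ha' hb hb']
  · exact (false_of_le_lt_le_kreweras hπ hπa hκa hrel hA hB ha ha' hb hb'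
      (Fin.le_def.2 (by omega)) (Fin.lt_def.2 (by omega)) (Fin.le_def.2 (by omega))).elim
  · exact (false_of_lt_le_lt_kreweras hπ hπa hκa hrel hB hA hb hb' ha ha'
      (Fin.lt_def.2 (by omega)) (Fin.le_def.2 (by omega)) (Fin.lt_def.2 (by omega))).elim
  · rw [hκNC A hA B hB a b a' b' (Fin.lt_def.2 (by omega)) (Fin.lt_def.2 (by omega))
      (Fin.lt_def.2 (by omega)) ha ha' hb hb']

lemma IsOddEvenJoin.sameBlock_oddEmb (hφ : IsOddEvenJoin π κ φ) {a b : Fin n}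
    (h : SameBlock π a b) : SameBlock φ (oddEmb a) (oddEmb b) := by
  obtain ⟨A, hA, ha, hb⟩ := h
  refine ⟨A.image oddEmb, ?_, Finset.mem_image_of_mem _ ha, Finset.mem_image_of_mem _ hb⟩
  rw [hφ]
  exact Finset.mem_union_left _ (Finset.mem_image_of_mem _ hA)

lemma IsOddEvenJoin.sameBlock_evenEmb (hφ : IsOddEvenJoin π κ φ) {a b : Fin n}
    (h : SameBlock κ a b) : SameBlock φ (evenEmb a) (evenEmb b) := by
  obtain ⟨B, hB, ha, hb⟩ := h
  refine ⟨B.image evenEmb, ?_, Finset.mem_image_of_mem _ ha, Finset.mem_image_of_mem _ hb⟩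
  rw [hφ]
  exact Finset.mem_union_right _ (Finset.mem_image_of_mem _ hB)

end OddEvenJoin

def PredMinSameBlockSuccMax {m : ℕ} (φ : FP m) : Prop :=
  ∀ C ∈ φ.parts, ∀ c₁ c₂ : Fin m, IsMinOf c₁ C → IsMaxOf c₂ C → 0 < c₁.val → c₂.val + 1 < m →
    ∃ d e : Fin m, d.val + 1 = c₁.val ∧ e.val = c₂.val + 1 ∧ SameBlock φ d e

lemma IsOddEvenJoin.predMinSameBlockSuccMax {n : ℕ} {π κ : FP n} {φ : FP (2*n)}
    (hφ : IsOddEvenJoin π κ φ) (hκ : IsKrewerasPair π κ) : PredMinSameBlockSuccMax φ := by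
  obtain ⟨σπ, σκ, hπa, hκa, hrel⟩ := hκ
  intro C hC c₁ c₂ hc₁ hc₂ h₁ h₂
  rcases hφ.mem_parts hC with ⟨A, hA, rfl⟩ | ⟨B, hB, rfl⟩
  · obtain ⟨α, rfl, hα⟩ := hc₁.of_image oddEmb_strictMono
    obtain ⟨μ, rfl, hμ⟩ := hc₂.of_image oddEmb_strictMono
    simp only [oddEmb] at h₁ ⊢
    obtain ⟨d, hd, hdμ⟩ := exists_sameBlock_pred_min_max hπa hκa hrel hA hα hμ (by omega)
    exact ⟨evenEmb d, evenEmb μ, by simp only [evenEmb]; omega, rfl, hφ.sameBlock_evenEmb hdμ⟩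
  · obtain ⟨β, rfl, hβ⟩ := hc₁.of_image evenEmb_strictMono
    obtain ⟨M, rfl, hM⟩ := hc₂.of_image evenEmb_strictMono
    simp only [evenEmb] at h₂ ⊢
    obtain ⟨e, he, hβe⟩ := exists_sameBlock_min_succ_max hπa hκa hrel hB hβ hM (by omega)
    exact ⟨oddEmb β, oddEmb e, rfl, by simp only [oddEmb]; omega, hφ.sameBlock_oddEmb hβe⟩

section Parity

variable {m : ℕ} {X Y : Finset (Fin m)}

lemma SameParity.mod_two_eq (h : SameParity X Y) {x y : Fin m} (hx : x ∈ X) (hy : y ∈ Y) :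
    x.val % 2 = y.val % 2 := by
  rcases h with ⟨hX, hY⟩ | ⟨hX, hY⟩ <;> rw [hX x hx, hY y hy]

lemma ParityPreserving.mod_two_eq {φ : FP m} (hφ : ParityPreserving φ) {D : Finset (Fin m)}
    (hD : D ∈ φ.parts) {d d' : Fin m} (hd : d ∈ D) (hd' : d' ∈ D) : d.val % 2 = d'.val % 2 :=
  (hφ D hD).elim (fun h => (h d hd).trans (h d' hd').symm) fun h => (h d hd).trans (h d' hd').symm

end Parity

lemma Refines.subset_of_mem {m : ℕ} {θ φ : FP m} (h : Refines θ φ) {W D : Finset (Fin m)}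
    (hW : W ∈ θ.parts) (hD : D ∈ φ.parts) {w : Fin m} (hwW : w ∈ W) (hwD : w ∈ D) : W ⊆ D := by
  obtain ⟨D', hD', hWD'⟩ := h W hW
  rwa [φ.eq_of_mem_parts hD hD' hwD (hWD' hwW)]

lemma IsParent.exists_forall_mem_Ioo {m : ℕ} {θ : FP m} {X Y : Finset (Fin m)}
    (hX : X ∈ θ.parts) (hXY : IsParent θ X Y) :
    ∃ y₁ ∈ Y, ∃ y₂ ∈ Y, ∀ x ∈ X, x ∈ Set.Ioo y₁ y₂ := by
  obtain ⟨hY, hYX, hemb, -⟩ := hXY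
  obtain ⟨y₁, hy₁, hy₁X⟩ := hemb.exists_forall_le
  obtain ⟨y₂, hy₂, hy₂X⟩ := hemb.exists_forall_ge
  exact ⟨y₁, hy₁, y₂, hy₂, fun x hx =>
    ⟨(hy₁X x hx).lt_of_ne (ne_of_mem_parts_of_ne hY hX hYX hy₁ hx),
      (hy₂X x hx).lt_of_ne (ne_of_mem_parts_of_ne hX hY hYX.symm hx hy₂)⟩⟩

/-- `W` embraces `Y` as well, so it has a point below `y₁`; the block of `φ` containing `W` then
crosses the block containing `Y` unless the two coincide. -/
lemma IsParent.eq_of_embraces {m : ℕ} {θ φ : FP m} (hφ : IsNC φ) {X Y : Finset (Fin m)}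
    (hXY : IsParent θ X Y) {W : Finset (Fin m)} (hW : W ∈ θ.parts) (hWX : W ≠ X)
    (hWX' : Embraces W X) {D C : Finset (Fin m)} (hD : D ∈ φ.parts) (hC : C ∈ φ.parts)
    (hWD : W ⊆ D) (hYC : Y ⊆ C) {y₁ y₂ d : Fin m} (hy₁ : y₁ ∈ Y) (hy₂ : y₂ ∈ Y) (hd : d ∈ D)
    (hdy : d ∈ Set.Ioo y₁ y₂) : D = C := by
  by_contra hDC
  obtain ⟨w, hw, hwY⟩ := (hXY.2.2.2 W hW hWX hWX').exists_forall_le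
  exact (hwY y₁ hy₁).not_gt
    (hφ.forall_mem_Ioo hD hC hDC (hYC hy₁) (hYC hy₂) hd hdy w (hWD hw)).1

lemma exists_parts_superset_of_isParent {m : ℕ} {θ φ : FP m} (hφ : IsNC φ)
    (hφpar : ParityPreserving φ) (hφbr : PredMinSameBlockSuccMax φ) (hll : Ll θ φ)
    {X Y : Finset (Fin m)} (hX : X ∈ θ.parts) (hXY : IsParent θ X Y) (hsame : SameParity X Y) :
    ∃ C ∈ φ.parts, X ⊆ C ∧ Y ⊆ C := by
  obtain ⟨y₁, hy₁, y₂, hy₂, hXy⟩ := hXY.exists_forall_mem_Ioo hX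
  obtain ⟨C, hC, hXC⟩ := hll.1 X hX
  obtain ⟨C', hC', hYC'⟩ := hll.1 Y hXY.1
  suffices hCC' : C = C' from ⟨C, hC, hXC, hCC' ▸ hYC'⟩
  obtain ⟨x, hx⟩ := θ.nonempty_of_mem_parts hX
  obtain ⟨Z, hZ, c₁, c₂, hc₁, hc₂, hc₁Z, hc₂Z⟩ := hll.2 C hC
  by_cases hZX : Z ≠ X
  · exact hXY.eq_of_embraces hφ hZ hZX (embraces_of_forall ⟨x, hx⟩ hc₁Z hc₂Z fun b hb =>
      ⟨hc₁.2 b (hXC hb), hc₂.2 b (hXC hb)⟩) hC hC' (hll.1.subset_of_mem hZ hC hc₁Z hc₁.1) hYC'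
      hy₁ hy₂ (hXC hx) (hXy x hx)
  -- `X` spans `C`: use the block of `φ` through `min C - 1` and `max C + 1` instead
  push Not at hZX
  subst Z
  obtain ⟨hyc₁, hc₁y⟩ := hXy c₁ hc₁Z
  rw [Fin.lt_def] at hyc₁ hc₁y
  have hc₂y := Fin.lt_def.1 (hXy c₂ hc₂Z).2
  obtain ⟨d, e, hdc, hec, D, hD, hdD, heD⟩ :=
    hφbr C hC c₁ c₂ hc₁ hc₂ (by omega) (by have := y₂.isLt; omega)
  obtain ⟨W, hW, d₁, e₁, hd₁, he₁, hd₁W, he₁W⟩ := hll.2 D hD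
  have hd₁c := Fin.le_def.1 (hd₁.2 d hdD)
  have he₁c := Fin.le_def.1 (he₁.2 e heD)
  have hWX : W ≠ X := fun h => by
    have := Fin.le_def.1 (hc₁.2 d₁ (hXC (h ▸ hd₁W)))
    omega
  have hWX' : Embraces W X := embraces_of_forall ⟨x, hx⟩ hd₁W he₁W fun b hb => by
    have h₁ := Fin.le_def.1 (hc₁.2 b (hXC hb))
    have h₂ := Fin.le_def.1 (hc₂.2 b (hXC hb))
    exact ⟨Fin.le_def.2 (by omega), Fin.le_def.2 (by omega)⟩
  have hpar := hsame.mod_two_eq hc₁Z hy₁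
  have hdy : d ∈ Set.Ioo y₁ y₂ := ⟨Fin.lt_def.2 (by omega), Fin.lt_def.2 (by omega)⟩
  have hDC' := hXY.eq_of_embraces hφ hW hWX hWX' hD hC'
    (hll.1.subset_of_mem hW hD hd₁W hd₁.1) hYC' hy₁ hy₂ hdD hdy
  have := hφpar.mod_two_eq hC' (hDC' ▸ hdD) (hYC' hy₁)
  omega

theorem statement16_general (n : ℕ) (π κ : FP n) (hπ : IsNC π)
    (hκ : IsKrewerasPair π κ) (φ : FP (2*n)) (hφ : IsOddEvenJoin π κ φ)
    (θ : FP (2*n)) (hθNC : IsNC θ) (hθpar : ParityPreserving θ) (hll : Ll θ φ)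
    (X Y : Finset (Fin (2*n))) (hX : X ∈ θ.parts) (hXY : IsParent θ X Y)
    (hsame : SameParity X Y)
    (θ' : FP (2*n)) (hθ' : θ'.parts = insert (X ∪ Y) ((θ.parts.erase X).erase Y)) :
    ParityPreserving θ' ∧ IsNC θ' ∧ Ll θ' φ := by
  obtain ⟨C, hC, hXC, hYC⟩ := exists_parts_superset_of_isParent (hφ.isNC hπ hκ)
    hφ.parityPreserving (hφ.predMinSameBlockSuccMax hκ) hll hX hXY hsame
  exact ⟨hθpar.merge hsame hθ', hθNC.merge_parent hX hXY hθ', hll.merge hC hXC hYC hθ'⟩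

/-- Lemma 6.9: let `π ∈ NC(n)`, let `φ = π^(odd) ∪ K(π)^(even)`, and
let `θ` be a parity-preserving partition in `NC(2n)` with `θ ≪ φ`.  If `X, Y` are
blocks of `θ` with `Y = Parent_θ(X)` of the same parity as `X`, then the partition
`θ'` obtained from `θ` by joining `X` and `Y` is also a parity-preserving partition
in `NC(2n)` with `θ' ≪ φ`. -/
theorem statement16 (n : ℕ) (hn : 0 < n) (π κ : FP n) (hπ : IsNC π)
    (hκ : IsKrewerasPair π κ) (φ : FP (2*n)) (hφ : IsOddEvenJoin π κ φ)
    (θ : FP (2*n)) (hθNC : IsNC θ) (hθpar : ParityPreserving θ) (hll : Ll θ φ)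
    (X Y : Finset (Fin (2*n))) (hX : X ∈ θ.parts) (hXY : IsParent θ X Y)
    (hsame : SameParity X Y)
    (θ' : FP (2*n)) (hθ' : θ'.parts = insert (X ∪ Y) ((θ.parts.erase X).erase Y)) :
    ParityPreserving θ' ∧ IsNC θ' ∧ Ll θ' φ :=
  statement16_general n π κ hπ hκ φ hφ θ hθNC hθpar hll X Y hX hXY hsame θ' hθ'

end BBP
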